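/- arXiv:2507.03455 — 2 statements merged into one kernel-verified Lean document; each statement's English description precedes it below -/
import Mathlib

section
/- Let λ ∈ (1/2)ℕ be positive and L a nonnegative rational. Then √(λ² - 2Lλ - L²) is rational if and only if there exists a rational α ≥ 1 with L = (2(α-1)/(α²+1))·λ. -/
theorem rational_sqrt_iff (lam : ℝ) (hlam : 0 < lam) (hhalf : ∃ m : ℕ, lam = m / 2)
    (L : ℚ) (hL : 0 ≤ L)
    (hdisc : 0 ≤ lam ^ 2 - 2 * (L : ℝ) * lam - (L : ℝ) ^ 2) :
    (∃ s : ℚ, (s : ℝ) = Real.sqrt (lam ^ 2 - 2 * (L : ℝ) * lam - (L : ℝ) ^ 2)) ↔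
    (∃ α : ℚ, 1 ≤ α ∧ (L : ℝ) = 2 * ((α : ℝ) - 1) / ((α : ℝ) ^ 2 + 1) * lam) := by
  obtain ⟨m, hm⟩ := hhalf
  set lq : ℚ := (m : ℚ) / 2 with hlq
  have hcast : (lq : ℝ) = lam := by rw [hm, hlq]; push_cast; ring
  have hlq0 : 0 < lq := by
    have : (0 : ℝ) < (lq : ℝ) := by rw [hcast]; exact hlam
    exact_mod_cast this
  constructor
  · rintro ⟨s, hs⟩
    have hs0 : 0 ≤ (s : ℝ) := hs ▸ Real.sqrt_nonneg _
    have hkey : (s : ℝ) ^ 2 = lam ^ 2 - 2 * (L : ℝ) * lam - (L : ℝ) ^ 2 := by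
      rw [hs, Real.sq_sqrt hdisc]
    rcases eq_or_lt_of_le hL with h0 | hLpos
    · refine ⟨1, le_refl _, ?_⟩
      rw [← h0]; push_cast; ring
    · have hLr : (0:ℝ) < (L:ℝ) := by exact_mod_cast hLpos
      have hLlt : (L : ℝ) < lam := by nlinarith
      refine ⟨(s + lq) / L, ?_, ?_⟩
      · rw [le_div_iff₀ hLpos, one_mul]
        have : (L : ℝ) ≤ ((s : ℚ) : ℝ) + (lq : ℝ) := by
          rw [hcast]; nlinarith
        exact_mod_cast this
      · have hαr : (((s + lq) / L : ℚ) : ℝ) = ((s : ℝ) + lam) / (L : ℝ) := by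
          push_cast; rw [hcast]
        rw [hαr]
        have hLne : (L : ℝ) ≠ 0 := by positivity
        have hden : ((s : ℝ) + lam) ^ 2 + (L : ℝ) ^ 2 ≠ 0 := by nlinarith
        field_simp
        nlinarith [hkey]
  · rintro ⟨α, hα, hαL⟩
    have hαne : ((α : ℝ) ^ 2 + 1) ≠ 0 := by positivity
    refine ⟨lq * |α ^ 2 - 2 * α - 1| / (α ^ 2 + 1), ?_⟩
    have hqne : ((α : ℚ) ^ 2 + 1) ≠ 0 := by positivity
    have hs0 : (0 : ℝ) ≤ ((lq * |α ^ 2 - 2 * α - 1| / (α ^ 2 + 1) : ℚ) : ℝ) := by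
      have : (0:ℚ) ≤ lq * |α ^ 2 - 2 * α - 1| / (α ^ 2 + 1) := by positivity
      exact_mod_cast this
    rw [show lam ^ 2 - 2 * (L : ℝ) * lam - (L : ℝ) ^ 2
        = (((lq * |α ^ 2 - 2 * α - 1| / (α ^ 2 + 1) : ℚ) : ℝ)) ^ 2 from ?_,
      Real.sqrt_sq hs0]
    push_cast
    rw [hcast, hαL]
    simp only [div_pow, mul_pow, sq_abs]
    field_simp
    ring
end

section
/- The improper integral ∫₀¹ (1/r)·((4r cos ϑ - 3r² - 4r² cos²ϑ + 4r³ cos ϑ - r⁴)/(1 - 2r cos ϑ + r²)²) dr equals -1 + 1/(2 - 2cos ϑ) + ((π - ϑ)/2)·cot ϑ - (1/2)·ln(2 - 2cos ϑ), for ϑ ∈ (0, π). -/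
/-!
Once the factor `1 / r` is cancelled against the numerator, which vanishes at `r = 0`, the
integrand becomes `(2c - r) / D + (2c - 2r) / D²` with `D = 1 - 2rc + r² = (r - c)² + s²`
(`c = cos ϑ`, `s = sin ϑ`), continuous on all of `ℝ`. It has the elementary primitive
`-½ log D + (c / s) arctan ((r - c) / s) + 1 / D`, and the two arctangents at `r = 1` and `r = 0`
are `ϑ / 2` and `ϑ - π / 2`.
-/

open Real

theorem one_sub_two_mul_cos_add_sq_eq (ϑ r : ℝ) :
    1 - 2 * r * cos ϑ + r ^ 2 = (r - cos ϑ) ^ 2 + sin ϑ ^ 2 := by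
  linear_combination -sin_sq_add_cos_sq ϑ

theorem one_sub_two_mul_cos_add_sq_pos {ϑ : ℝ} (hs : sin ϑ ≠ 0) (r : ℝ) :
    0 < 1 - 2 * r * cos ϑ + r ^ 2 := by
  rw [one_sub_two_mul_cos_add_sq_eq]; positivity

theorem one_sub_cos_two_mul_div_sin_two_mul (x : ℝ) :
    (1 - cos (2 * x)) / sin (2 * x) = tan x := by
  rcases eq_or_ne (sin x) 0 with h | h
  · simp [sin_two_mul, tan_eq_sin_div_cos, h]
  rw [cos_two_mul', sin_two_mul, tan_eq_sin_div_cos,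
    show 1 - (cos x ^ 2 - sin x ^ 2) = 2 * sin x * sin x by linear_combination -sin_sq_add_cos_sq x,
    mul_div_mul_left _ _ (by simpa using h)]

theorem arctan_one_sub_cos_div_sin {ϑ : ℝ} (h₁ : -π < ϑ) (h₂ : ϑ < π) :
    arctan ((1 - cos ϑ) / sin ϑ) = ϑ / 2 := by
  have h := one_sub_cos_two_mul_div_sin_two_mul (ϑ / 2)
  rw [mul_div_cancel₀ ϑ two_ne_zero] at h
  rw [h, arctan_tan (by linarith) (by linarith)]

theorem arctan_neg_cos_div_sin {ϑ : ℝ} (h₁ : 0 < ϑ) (h₂ : ϑ < π) :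
    arctan (-cos ϑ / sin ϑ) = ϑ - π / 2 := by
  have ht : -cos ϑ / sin ϑ = tan (ϑ - π / 2) := by
    rw [tan_eq_sin_div_cos, sin_sub_pi_div_two, cos_sub_pi_div_two]
  rw [ht, arctan_tan (by linarith) (by linarith)]

namespace PoissonIntegral

noncomputable def primitive (ϑ r : ℝ) : ℝ :=
  -(1 / 2) * log (1 - 2 * r * cos ϑ + r ^ 2)
    + cos ϑ / sin ϑ * arctan ((r - cos ϑ) / sin ϑ)
    + (1 - 2 * r * cos ϑ + r ^ 2)⁻¹

noncomputable def integrand (ϑ r : ℝ) : ℝ :=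
  (2 * cos ϑ - r) / (1 - 2 * r * cos ϑ + r ^ 2)
    + (2 * cos ϑ - 2 * r) / (1 - 2 * r * cos ϑ + r ^ 2) ^ 2

theorem integrand_eq {ϑ r : ℝ} (hs : sin ϑ ≠ 0) (hr : r ≠ 0) :
    (1 / r) * ((4 * r * cos ϑ - 3 * r ^ 2 - 4 * r ^ 2 * cos ϑ ^ 2 + 4 * r ^ 3 * cos ϑ - r ^ 4)
      / (1 - 2 * r * cos ϑ + r ^ 2) ^ 2) = integrand ϑ r := by
  have hD := (one_sub_two_mul_cos_add_sq_pos hs r).ne'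
  rw [integrand]; field_simp; ring

theorem continuous_integrand {ϑ : ℝ} (hs : sin ϑ ≠ 0) : Continuous (integrand ϑ) := by
  have hD := fun r => (one_sub_two_mul_cos_add_sq_pos hs r).ne'
  unfold integrand
  fun_prop (disch := simp [hD])

theorem hasDerivAt_primitive {ϑ : ℝ} (hs : sin ϑ ≠ 0) (r : ℝ) :
    HasDerivAt (primitive ϑ) (integrand ϑ r) r := by
  have hD := (one_sub_two_mul_cos_add_sq_pos hs r).ne'
  have hq : HasDerivAt (fun x => 1 - 2 * x * cos ϑ + x ^ 2) (2 * r - 2 * cos ϑ) r :=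
    ((((hasDerivAt_id' r).const_mul 2).mul_const (cos ϑ)).const_sub 1).add
      (hasDerivAt_pow 2 r) |>.congr_deriv (by norm_num; ring)
  have harg : HasDerivAt (fun x => (x - cos ϑ) / sin ϑ) (1 / sin ϑ) r := by
    simpa using ((hasDerivAt_id r).sub_const (cos ϑ)).div_const (sin ϑ)
  have hsq : 1 + ((r - cos ϑ) / sin ϑ) ^ 2 = (1 - 2 * r * cos ϑ + r ^ 2) / sin ϑ ^ 2 := by
    rw [one_sub_two_mul_cos_add_sq_eq]; field_simp; ring
  unfold primitive integrand
  refine (((hq.log hD).const_mul (-(1 / 2))).add (harg.arctan.const_mul (cos ϑ / sin ϑ))).add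
    (hq.inv hD) |>.congr_deriv ?_
  rw [hsq]
  field_simp
  ring

end PoissonIntegral

theorem integral_I0_n3 (ϑ : ℝ) (hϑ : ϑ ∈ Set.Ioo 0 Real.pi) :
    (∫ r in (0:ℝ)..1, (1 / r) *
        ((4 * r * Real.cos ϑ - 3 * r ^ 2 - 4 * r ^ 2 * Real.cos ϑ ^ 2
            + 4 * r ^ 3 * Real.cos ϑ - r ^ 4)
          / (1 - 2 * r * Real.cos ϑ + r ^ 2) ^ 2))
      = -1 + 1 / (2 - 2 * Real.cos ϑ)
        + (Real.pi - ϑ) / 2 * (Real.cos ϑ / Real.sin ϑ)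
        - 1 / 2 * Real.log (2 - 2 * Real.cos ϑ) := by
  open PoissonIntegral in
  obtain ⟨h₀, hπ⟩ := hϑ
  have hs : sin ϑ ≠ 0 := (sin_pos_of_pos_of_lt_pi h₀ hπ).ne'
  calc _ = ∫ r in (0:ℝ)..1, integrand ϑ r := by
        refine intervalIntegral.integral_congr_ae (.of_forall fun r hr => ?_)
        rw [Set.uIoc_of_le zero_le_one] at hr
        exact integrand_eq hs hr.1.ne'
    _ = primitive ϑ 1 - primitive ϑ 0 :=
        intervalIntegral.integral_eq_sub_of_hasDerivAt (fun r _ => hasDerivAt_primitive hs r)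
          ((continuous_integrand hs).intervalIntegrable 0 1)
    _ = _ := by
      simp only [primitive, zero_sub, arctan_neg_cos_div_sin h₀ hπ,
        arctan_one_sub_cos_div_sin (by linarith [pi_pos]) hπ]
      rw [show (1 : ℝ) - 2 * 1 * cos ϑ + 1 ^ 2 = 2 - 2 * cos ϑ by ring,
        show (1 : ℝ) - 2 * 0 * cos ϑ + 0 ^ 2 = 1 by ring, log_one, inv_one]
      field_simp
      ring
end
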